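/- arXiv:1307.2718 — 8 statements merged into one kernel-verified Lean document; each statement's English description precedes it below -/
import Mathlib

section
/- Let q be a power of a prime p and let d ≥ 2 be an integer. If p does not divide d and gcd(q−1, d−1) = 1, then N_d(q) ≤ q^{d−1}. -/
/-- The relation on polynomials of degree exactly `d` over `F`:
`f ~ g` iff the functional graphs of the induced maps are isomorphic, i.e.
there is a bijection `σ` with `σ ∘ f = g ∘ σ`. -/
def polyFunRel (F : Type*) [Field F] (d : ℕ)
    (f g : {f : Polynomial F // f.natDegree = d}) : Prop :=
  ∃ σ : F ≃ F,
    ⇑σ ∘ (fun x => Polynomial.eval x f.1) = (fun x => Polynomial.eval x g.1) ∘ ⇑σ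

/-- `N_d(q)`: the number of isomorphism classes of functional graphs of maps
`x ↦ f(x)` as `f` ranges over polynomials of degree exactly `d` over `F`. -/
noncomputable def numFunctionalGraphs (F : Type*) [Field F] (d : ℕ) : ℕ :=
  Nat.card (Quot (polyFunRel F d))

/-!
Every polynomial map of degree `d` is conjugate, by an affine bijection of `F`, to one given by
a polynomial `X ^ d + r` with `deg r < d - 1`. A scaling `x ↦ u x` divides the leading
coefficient by `u ^ (d - 1)`, and `x ↦ u ^ (d - 1)` is onto `Fˣ` since `gcd (q - 1, d - 1) = 1`;
a translation `x ↦ x - e` then shifts the coefficient of `X ^ (d - 1)` by `d e`, which kills it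
because `d` is invertible in `F`. There are only `q ^ (d - 1)` such polynomials `X ^ d + r`.
-/

open Polynomial Function

lemma coeff_taylor_of_natDegree_eq_succ {R : Type*} [CommSemiring R] {g : R[X]} {n : ℕ}
    (hg : g.natDegree = n + 1) (e : R) :
    (taylor e g).coeff n = g.coeff n + (n + 1) * g.coeff (n + 1) * e := by
  rw [taylor_coeff, hasseDeriv_apply, eval_sum, sum_over_range' _ (by simp) (n + 2) (by omega)]
  simp only [eval_monomial, Finset.sum_range_succ]
  rw [Finset.sum_eq_zero fun i hi => by
    rw [Nat.choose_eq_zero_of_lt (Finset.mem_range.mp hi)]; simp]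
  simp [Nat.choose_succ_self_right]

section
variable {F : Type*} [Field F]

lemma exists_semiconj_monic {f : F[X]} (hf : 0 < f.natDegree) {u : F} (hu : u ≠ 0)
    (hlc : u ^ (f.natDegree - 1) = f.leadingCoeff) :
    ∃ (σ : F ≃ F) (g : F[X]), g.Monic ∧ g.natDegree = f.natDegree ∧
      Semiconj σ (eval · f) (eval · g) := by
  have hX : (C u⁻¹ * X).natDegree = 1 := natDegree_C_mul_X _ (inv_ne_zero hu)
  refine ⟨Equiv.mulLeft₀ u hu, C u * f.comp (C u⁻¹ * X), ?_, ?_, fun x => ?_⟩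
  · have hpow : u ^ f.natDegree = u * f.leadingCoeff := by
      rw [← hlc, ← pow_succ', Nat.sub_add_cancel hf]
    rw [Monic, leadingCoeff_mul, leadingCoeff_C, leadingCoeff_comp (by omega),
      leadingCoeff_C_mul_X, inv_pow, hpow]
    field_simp [leadingCoeff_ne_zero.mpr (ne_zero_of_natDegree_gt hf)]
  · rw [natDegree_C_mul hu, natDegree_comp, hX, mul_one]
  · simp [inv_mul_cancel_left₀ hu]

lemma exists_semiconj_monic_coeff_eq_zero {g : F[X]} (hg : g.Monic) {n : ℕ}
    (hdeg : g.natDegree = n + 1) (hn : 0 < n) (hchar : ((n + 1 : ℕ) : F) ≠ 0) :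
    ∃ (σ : F ≃ F) (h : F[X]), h.Monic ∧ h.natDegree = n + 1 ∧ h.coeff n = 0 ∧
      Semiconj σ (eval · g) (eval · h) := by
  set e := -g.coeff n / (n + 1 : ℕ)
  have he : ((n + 1 : ℕ) : F) * e = -g.coeff n := mul_div_cancel₀ _ hchar
  have hdegC : (C e).degree < (taylor e g).degree := by
    rw [degree_taylor, degree_eq_natDegree hg.ne_zero, hdeg]
    exact (degree_C_le).trans_lt (by exact_mod_cast Nat.succ_pos n)
  refine ⟨Equiv.subRight e, taylor e g - C e, ?_, ?_, ?_, fun x => ?_⟩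
  · exact Monic.sub_of_left (by rwa [Monic, leadingCoeff_taylor]) hdegC
  · rw [natDegree_sub_C, natDegree_taylor, hdeg]
  · rw [coeff_sub, coeff_C, if_neg hn.ne', sub_zero, coeff_taylor_of_natDegree_eq_succ hdeg,
      ← hdeg, hg.coeff_natDegree]
    push_cast at he
    linear_combination he
  · simp [taylor_eval]

lemma sub_X_pow_mem_degreeLT {h : F[X]} (hh : h.Monic) {n : ℕ} (hdeg : h.natDegree = n + 1)
    (hcoeff : h.coeff n = 0) : h - X ^ (n + 1) ∈ degreeLT F n := by
  rw [mem_degreeLT, degree_lt_iff_coeff_zero]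
  intro k hk
  rw [coeff_sub, coeff_X_pow]
  rcases (show n ≤ k by exact_mod_cast hk).eq_or_lt with rfl | hlt
  · simp [hcoeff]
  · rcases (show n + 1 ≤ k from hlt).eq_or_lt with rfl | hlt'
    · rw [← hdeg, hh.coeff_natDegree, if_pos rfl, sub_self]
    · rw [coeff_eq_zero_of_natDegree_lt (hdeg ▸ hlt'), if_neg (by omega), sub_zero]

lemma natDegree_X_pow_add_of_mem_degreeLT {r : F[X]} {n : ℕ} (hr : r ∈ degreeLT F n) :
    (X ^ (n + 1) + r).natDegree = n + 1 := by
  refine (natDegree_add_eq_left_of_degree_lt ?_).trans (natDegree_X_pow _)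
  rw [degree_X_pow]
  exact (mem_degreeLT.mp hr).trans (by exact_mod_cast n.lt_add_one)

noncomputable def normalForm (n : ℕ) (r : degreeLT F n) : {f : F[X] // f.natDegree = n + 1} :=
  ⟨X ^ (n + 1) + r.1, natDegree_X_pow_add_of_mem_degreeLT r.2⟩

lemma surjective_quotMk_normalForm {n : ℕ} (hn : 0 < n) (hchar : ((n + 1 : ℕ) : F) ≠ 0)
    (hpow : Surjective (· ^ n : Fˣ → Fˣ)) :
    Surjective (Quot.mk (polyFunRel F (n + 1)) ∘ normalForm n) := by
  rintro ⟨f, hf⟩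
  have hlc : f.leadingCoeff ≠ 0 :=
    leadingCoeff_ne_zero.mpr (ne_zero_of_natDegree_gt (n := 0) (by omega))
  obtain ⟨u, hu⟩ := hpow (Units.mk0 _ hlc)
  obtain ⟨σ₁, g, hg, hgdeg, hσ₁⟩ := exists_semiconj_monic (f := f) (by omega) u.ne_zero
    (by rw [hf, Nat.add_sub_cancel]; exact congrArg Units.val hu)
  obtain ⟨σ₂, h, hh, hhdeg, hcoeff, hσ₂⟩ :=
    exists_semiconj_monic_coeff_eq_zero hg (hgdeg.trans hf) hn hchar
  refine ⟨⟨h - X ^ (n + 1), sub_X_pow_mem_degreeLT hh hhdeg hcoeff⟩, Eq.symm (Quot.sound ?_)⟩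
  refine ⟨σ₁.trans σ₂, ?_⟩
  simpa [normalForm] using (hσ₁.trans hσ₂).comp_eq

end

theorem stmt3_general (p : ℕ) (F : Type*) [Field F] [Fintype F] [CharP F p]
    (q : ℕ) (hq : q = Fintype.card F) (d : ℕ) (hd : 2 ≤ d)
    (hpd : ¬ p ∣ d) (hgcd : Nat.gcd (q - 1) (d - 1) = 1) :
    numFunctionalGraphs F d ≤ q ^ (d - 1) := by
  obtain ⟨n, rfl⟩ : ∃ n, d = n + 1 := ⟨d - 1, by omega⟩
  have hchar : ((n + 1 : ℕ) : F) ≠ 0 := by rwa [Ne, CharP.cast_eq_zero_iff F p]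
  have hcop : (Nat.card Fˣ).Coprime n := by
    rwa [Nat.card_units, Nat.card_eq_fintype_card, ← hq]
  have : Finite (degreeLT F n) := .of_equiv _ (degreeLTEquiv F n).toEquiv.symm
  calc numFunctionalGraphs F (n + 1) ≤ Nat.card (degreeLT F n) :=
        Nat.card_le_card_of_surjective _
          (surjective_quotMk_normalForm (by omega) hchar hcop.pow_left_bijective.surjective)
    _ = q ^ (n + 1 - 1) := by
        rw [Nat.card_congr (degreeLTEquiv F n).toEquiv]
        simp [hq]

theorem stmt3 (p : ℕ) (hp : p.Prime) (F : Type*) [Field F] [Fintype F] [CharP F p]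
    (q : ℕ) (hq : q = Fintype.card F) (d : ℕ) (hd : 2 ≤ d)
    (hpd : ¬ p ∣ d) (hgcd : Nat.gcd (q - 1) (d - 1) = 1) :
    numFunctionalGraphs F d ≤ q ^ (d - 1) :=
  stmt3_general p F q hq d hd hpd hgcd
end

section
/- For any positive integers k and h and any γ, δ ∈ Γ_e, one has G_{k+h,γ} ≡ G_{h,γ} (mod G_{k,δ}) in F_q[X], i.e., G_{k,δ} divides G_{k+h,γ} − G_{h,γ}. -/
open Polynomial in
/-- The iterates `F_0(X) = X`, `F_k(X) = F_{k-1}(X)^d + X`. -/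
noncomputable def Fiter (F : Type*) [Field F] (d : ℕ) : ℕ → Polynomial F
  | 0 => Polynomial.X
  | (k + 1) => (Fiter F d k) ^ d + Polynomial.X

/-- The polynomials `G_{k,γ}(X) = γ·F_k(X) − X`. -/
noncomputable def Gpoly (F : Type*) [Field F] (d : ℕ) (γ : F) (k : ℕ) : Polynomial F :=
  Polynomial.C γ * Fiter F d k - Polynomial.X

/-!
Since `F_{m+1} - F_{n+1} = F_m^d - F_n^d`, every divisor of `F_m - F_n` divides
`F_{m+1} - F_{n+1}`. For `h = 1` we have `F_{k+1} - F_1 = F_k^d - X^d = (δ F_k)^d - X^d`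
because `δ^d = 1`, and this is divisible by `δ F_k - X = G_{k,δ}`. Induction on `h` gives
`G_{k,δ} ∣ F_{k+h} - F_h`, and `G_{k+h,γ} - G_{h,γ} = γ (F_{k+h} - F_h)`.
-/

open Polynomial

namespace Fiter

variable {F : Type*} [Field F] {d : ℕ}

theorem succ_sub_succ (m n : ℕ) :
    Fiter F d (m + 1) - Fiter F d (n + 1) = Fiter F d m ^ d - Fiter F d n ^ d := by
  simp only [Fiter, add_sub_add_right_eq_sub]

theorem sub_dvd_succ_sub_succ (m n : ℕ) :
    Fiter F d m - Fiter F d n ∣ Fiter F d (m + 1) - Fiter F d (n + 1) := by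
  rw [succ_sub_succ]
  exact sub_dvd_pow_sub_pow _ _ d

end Fiter

namespace Gpoly

variable {F : Type*} [Field F] {d : ℕ}

theorem sub (γ : F) (m n : ℕ) :
    Gpoly F d γ m - Gpoly F d γ n = C γ * (Fiter F d m - Fiter F d n) := by
  simp only [Gpoly]
  ring

theorem dvd_Fiter_succ_sub_one {δ : F} (hδ : δ ^ d = 1) (k : ℕ) :
    Gpoly F d δ k ∣ Fiter F d (k + 1) - Fiter F d 1 := by
  have hpow : (C δ * Fiter F d k) ^ d = Fiter F d k ^ d := by
    rw [mul_pow, ← C_pow, hδ, C_1, one_mul]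
  rw [Fiter.succ_sub_succ, ← hpow]
  exact sub_dvd_pow_sub_pow _ _ d

theorem dvd_Fiter_add_sub {δ : F} (hδ : δ ^ d = 1) (k : ℕ) {h : ℕ} (hh : 1 ≤ h) :
    Gpoly F d δ k ∣ Fiter F d (k + h) - Fiter F d h := by
  induction h, hh using Nat.le_induction with
  | base => exact dvd_Fiter_succ_sub_one hδ k
  | succ h _ ih => exact ih.trans (Fiter.sub_dvd_succ_sub_succ (k + h) h)

end Gpoly

theorem stmt5_general (F : Type*) [Field F] [Fintype F] (d : ℕ)
    (e : ℕ) (he : e = Nat.gcd d (Fintype.card F - 1))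
    (γ δ : F) (hδ : δ ^ e = 1)
    (k h : ℕ) (hh : 1 ≤ h) :
    Gpoly F d δ k ∣ (Gpoly F d γ (k + h) - Gpoly F d γ h) := by
  obtain ⟨m, hdm⟩ : e ∣ d := he ▸ Nat.gcd_dvd_left _ _
  have hδd : δ ^ d = 1 := by rw [hdm, pow_mul, hδ, one_pow]
  rw [Gpoly.sub]
  exact (Gpoly.dvd_Fiter_add_sub hδd k hh).mul_left _

theorem stmt5 (F : Type*) [Field F] [Fintype F] (d : ℕ) (hd : 2 ≤ d)
    (e : ℕ) (he : e = Nat.gcd d (Fintype.card F - 1))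
    (γ δ : F) (hγ : γ ^ e = 1) (hδ : δ ^ e = 1)
    (k h : ℕ) (hk : 1 ≤ k) (hh : 1 ≤ h) :
    Gpoly F d δ k ∣ (Gpoly F d γ (k + h) - Gpoly F d γ h) :=
  stmt5_general F d e he γ δ hδ k h hh
end

section
/- For any positive integers k and m and any γ ∈ Γ_e, the greatest common divisor of G_{k,γ} and G_{m,γ} in F_q[X] is associated to G_{gcd(k,m),γ} (i.e., gcd(G_{k,γ}, G_{m,γ}) equals G_{gcd(k,m),γ} up to a nonzero scalar factor). -/
/-!
If `γ ^ d = 1`, then `F_{n+1} - F_1 = (γ F_n)^d - X^d` is divisible by `G_n = γ F_n - X`, and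
`F_{i+1} - F_{j+1} = F_i^d - F_j^d` is divisible by `F_i - F_j`; so `G_{n+j} ≡ G_j (mod G_n)`
for `j ≥ 1`. The Euclidean algorithm on the indices then carries over to the polynomials, as for
any strong divisibility sequence.
-/

namespace EuclideanDomain

variable {R : Type*} [EuclideanDomain R] [DecidableEq R]

theorem associated_gcd_comm (x y : R) : Associated (gcd x y) (gcd y x) :=
  associated_of_dvd_dvd (dvd_gcd (gcd_dvd_right x y) (gcd_dvd_left x y))
    (dvd_gcd (gcd_dvd_right y x) (gcd_dvd_left y x))

theorem associated_gcd_of_dvd_sub {x y z : R} (h : x ∣ y - z) :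
    Associated (gcd x y) (gcd x z) := by
  refine associated_of_dvd_dvd (dvd_gcd (gcd_dvd_left x y) ?_)
    (dvd_gcd (gcd_dvd_left x z) ?_)
  · simpa using dvd_sub (gcd_dvd_right x y) ((gcd_dvd_left x y).trans h)
  · simpa using dvd_add (gcd_dvd_right x z) ((gcd_dvd_left x z).trans h)

theorem associated_gcd_apply_of_dvd_apply_add_sub {a : ℕ → R}
    (ha : ∀ n j, 0 < j → a n ∣ a (n + j) - a j) {k m : ℕ} (hk : 0 < k) (hm : 0 < m) :
    Associated (gcd (a k) (a m)) (a (k.gcd m)) := by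
  induction hkm : k + m using Nat.strong_induction_on generalizing k m with
  | _ s ih =>
    wlog hle : k ≤ m generalizing k m
    · rw [Nat.gcd_comm]
      exact (associated_gcd_comm _ _).trans (this hm hk (by omega) (by omega))
    obtain rfl | hlt := hle.eq_or_lt
    · rw [gcd_self, Nat.gcd_self]
    obtain ⟨j, rfl⟩ := Nat.exists_eq_add_of_lt hlt
    have hj : 0 < j + 1 := j.succ_pos
    rw [add_assoc, Nat.gcd_self_add_right]
    exact (associated_gcd_of_dvd_sub (ha k (j + 1) hj)).trans
      (ih (k + (j + 1)) (by omega) hk hj rfl)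

end EuclideanDomain

section

open Polynomial

variable {F : Type*} [Field F] {d : ℕ} {γ : F}

theorem Fiter_sub_dvd_Fiter_succ_sub (i j : ℕ) :
    Fiter F d i - Fiter F d j ∣ Fiter F d (i + 1) - Fiter F d (j + 1) := by
  simpa [Fiter] using sub_dvd_pow_sub_pow (Fiter F d i) (Fiter F d j) d

theorem Gpoly_dvd_Fiter_add_sub (hγ : γ ^ d = 1) (n : ℕ) {j : ℕ} (hj : 0 < j) :
    Gpoly F d γ n ∣ Fiter F d (n + j) - Fiter F d j := by
  induction j, hj using Nat.le_induction with
  | base =>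
    have h : Fiter F d (n + 1) - Fiter F d 1 = (C γ * Fiter F d n) ^ d - X ^ d := by
      simp [Fiter, mul_pow, ← C_pow, hγ]
    rw [h]
    exact sub_dvd_pow_sub_pow _ _ d
  | succ j _ ih => exact ih.trans (Fiter_sub_dvd_Fiter_succ_sub (n + j) j)

theorem Gpoly_dvd_Gpoly_add_sub (hγ : γ ^ d = 1) (n : ℕ) {j : ℕ} (hj : 0 < j) :
    Gpoly F d γ n ∣ Gpoly F d γ (n + j) - Gpoly F d γ j := by
  have h : Gpoly F d γ (n + j) - Gpoly F d γ j = C γ * (Fiter F d (n + j) - Fiter F d j) := by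
    simp only [Gpoly]
    ring
  rw [h]
  exact (Gpoly_dvd_Fiter_add_sub hγ n hj).mul_left _

end

theorem stmt6_general (F : Type*) [Field F] [Fintype F] [DecidableEq F]
    (d : ℕ)
    (e : ℕ) (he : e = Nat.gcd d (Fintype.card F - 1))
    (γ : F) (hγ : γ ^ e = 1)
    (k m : ℕ) (hk : 1 ≤ k) (hm : 1 ≤ m) :
    Associated (EuclideanDomain.gcd (Gpoly F d γ k) (Gpoly F d γ m))
      (Gpoly F d γ (Nat.gcd k m)) := by
  obtain ⟨c, hc⟩ : e ∣ d := he ▸ Nat.gcd_dvd_left _ _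
  have hγd : γ ^ d = 1 := by rw [hc, pow_mul, hγ, one_pow]
  exact EuclideanDomain.associated_gcd_apply_of_dvd_apply_add_sub
    (fun n _ hj => Gpoly_dvd_Gpoly_add_sub hγd n hj) hk hm

theorem stmt6 (F : Type*) [Field F] [Fintype F] [DecidableEq F]
    (d : ℕ) (hd : 2 ≤ d)
    (e : ℕ) (he : e = Nat.gcd d (Fintype.card F - 1))
    (γ : F) (hγ : γ ^ e = 1)
    (k m : ℕ) (hk : 1 ≤ k) (hm : 1 ≤ m) :
    Associated (EuclideanDomain.gcd (Gpoly F d γ k) (Gpoly F d γ m))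
      (Gpoly F d γ (Nat.gcd k m)) :=
  stmt6_general F d e he γ hγ k m hk hm
end

section
/- Let A, B, C be nonzero polynomials in F_q[X] satisfying A + B + C = 0 and gcd(A, B, C) = 1. If deg A ≥ deg rad(ABC), then the formal derivatives A', B', C' are all zero. -/
theorem isRelPrime_of_add_add_eq_zero {R : Type*} [CommRing R] {a b c : R}
    (hsum : a + b + c = 0) (h : ∀ d : R, d ∣ a → d ∣ b → d ∣ c → IsUnit d) :
    IsRelPrime a b := fun d hda hdb =>
  h d hda hdb <| (dvd_add_right (dvd_add hda hdb)).mp (hsum ▸ dvd_zero d)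

open UniqueFactorizationMonoid in
theorem stmt8_general (F : Type*) [Field F] [DecidableEq F]
    (A B C : Polynomial F) (hA : A ≠ 0) (hB : B ≠ 0) (hC : C ≠ 0)
    (hsum : A + B + C = 0)
    (hgcd : ∀ P : Polynomial F, P ∣ A → P ∣ B → P ∣ C → IsUnit P)
    (hdeg : (radical (A * B * C)).natDegree ≤ A.natDegree) :
    Polynomial.derivative A = 0 ∧ Polynomial.derivative B = 0 ∧
      Polynomial.derivative C = 0 := by
  have hAB : IsCoprime A B := (isRelPrime_of_add_add_eq_zero hsum hgcd).isCoprime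
  exact (Polynomial.abc hA hB hC hAB hsum).resolve_left fun hlt =>
    Nat.not_succ_le_self _ (hlt.1.trans hdeg)

open UniqueFactorizationMonoid in
/-- Mason's theorem (polynomial abc). Here `radical` is the product of the
distinct monic irreducible divisors. -/
theorem stmt8 (F : Type*) [Field F] [Fintype F] [DecidableEq F]
    (A B C : Polynomial F) (hA : A ≠ 0) (hB : B ≠ 0) (hC : C ≠ 0)
    (hsum : A + B + C = 0)
    (hgcd : ∀ P : Polynomial F, P ∣ A → P ∣ B → P ∣ C → IsUnit P)
    (hdeg : (radical (A * B * C)).natDegree ≤ A.natDegree) :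
    Polynomial.derivative A = 0 ∧ Polynomial.derivative B = 0 ∧
      Polynomial.derivative C = 0 :=
  stmt8_general F A B C hA hB hC hsum hgcd hdeg
end

section
/- Let q be a prime power with gcd(d−1, q) = 1, let d ≥ 3 be an integer with e := gcd(d, q−1) ≥ 2, and let J ≥ 2 be an integer. For any collection of integers α_{j,γ} ∈ {0, 1, …, e−1} indexed by 2 ≤ j ≤ J and γ ∈ Γ_e \ {1}, not all equal to zero, the product ∏_{j=2}^{J} ∏_{γ ∈ Γ_e \ {1}} G_{j,γ}^{α_{j,γ}} is not equal to P^e for any polynomial P with coefficients in the algebraic closure of F_q. -/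
/-!
Suppose the product equals `P ^ e` and let `k` be the largest level carrying a nonzero exponent
`α_{k,c}`. A nonzero simple root `x` of `G_{k,c}` that is a root of no `G_{j,δ}` with `j < k` occurs
in the product with multiplicity exactly `α_{k,c}` (at level `k`, `γ ↦ G_{k,γ}(x) = γ F_k(x) - x`
has only one zero once `x ≠ 0`), and `0 < α_{k,c} < e` is not a multiple of `e`.

Such an `x` exists by counting. Multiple roots of `G_{k,c}` are roots of
`K = F_{k-1} - d X F_{k-1}'`, which is nonzero because `d - 1` is prime to the characteristic, so
`G_{k,c}` has at least `d^k - d^(k-1)` distinct roots. A common root of `G_{k,c}` and `G_{j,δ}`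
satisfies `F_j(x) = x / δ`, so it is a root of a polynomial of degree `d^(k-j)`; over `2 ≤ j < k`
and the fewer than `e ≤ d` values of `δ` these number at most `d^(k-1) - d`. Together with `0`
and the roots of `K` that is fewer than `2 d^(k-1)` points, while `d ≥ 3` gives
`d^k - d^(k-1) ≥ 2 d^(k-1)`.
-/

section

open Polynomial Finset

section RootMultiplicity

variable {R : Type*} [CommRing R]

theorem Polynomial.rootMultiplicity_sub_one_le_of_add_eq {f K : R[X]} (hK : K ≠ 0)
    (a b : R[X]) (h : a * f + b * derivative f = K) (x : R) :
    rootMultiplicity x f - 1 ≤ rootMultiplicity x K := by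
  rw [le_rootMultiplicity_iff hK, ← h]
  have hf := pow_rootMultiplicity_dvd f x
  exact dvd_add (((pow_dvd_pow _ (Nat.sub_le _ 1)).trans hf).mul_left a)
    ((pow_sub_one_dvd_derivative_of_pow_dvd hf).mul_left b)

variable [IsDomain R]

theorem Polynomial.card_roots_le_card_roots_toFinset_add [DecidableEq R] {f K : R[X]}
    (h : ∀ x, rootMultiplicity x f - 1 ≤ rootMultiplicity x K) :
    Multiset.card f.roots ≤ #f.roots.toFinset + Multiset.card K.roots := by
  set s := f.roots.toFinset
  calc Multiset.card f.roots = ∑ x ∈ s, f.roots.count x :=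
        (Multiset.toFinset_sum_count_eq _).symm
    _ ≤ ∑ x ∈ s, (1 + K.roots.count x) := sum_le_sum fun x _ => by
        rw [count_roots, count_roots]; have := h x; omega
    _ = #s + ∑ x ∈ s, K.roots.count x := by
        rw [sum_add_distrib, sum_const, smul_eq_mul, mul_one]
    _ ≤ #s + ∑ x ∈ s ∪ K.roots.toFinset, K.roots.count x := by
        gcongr; exact subset_union_left
    _ = #s + Multiset.card K.roots := by
        rw [Multiset.sum_count_eq_card fun a ha => mem_union_right _ (Multiset.mem_toFinset.2 ha)]

theorem Polynomial.rootMultiplicity_pow (p : R[X]) (n : ℕ) (x : R) :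
    rootMultiplicity x (p ^ n) = n * rootMultiplicity x p := by
  classical
  rw [← count_roots, roots_pow, Multiset.count_nsmul, count_roots]

theorem Polynomial.rootMultiplicity_prod_pow {ι : Type*} (s : Finset ι) (f : ι → R[X])
    (a : ι → ℕ) (hf : ∀ i ∈ s, f i ≠ 0) (x : R) :
    rootMultiplicity x (∏ i ∈ s, f i ^ a i) = ∑ i ∈ s, a i * rootMultiplicity x (f i) := by
  classical
  induction s using Finset.induction_on with
  | empty => simp
  | insert i s hi ih =>
    have hs : ∀ j ∈ s, f j ≠ 0 := fun j hj => hf j (mem_insert_of_mem hj)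
    rw [prod_insert hi, rootMultiplicity_mul, rootMultiplicity_pow, ih hs, sum_insert hi]
    exact mul_ne_zero (pow_ne_zero _ (hf i (mem_insert_self i s)))
      (prod_ne_zero_iff.2 fun j hj => pow_ne_zero _ (hs j hj))

theorem Polynomial.rootMultiplicity_prod_pow_eq_of_ne {ι : Type*} {s : Finset ι}
    {f : ι → R[X]} {a : ι → ℕ} (hf : ∀ i ∈ s, f i ≠ 0) {i₀ : ι} (hi₀ : i₀ ∈ s) {x : R}
    (hx : rootMultiplicity x (f i₀) = 1)
    (hother : ∀ i ∈ s, i ≠ i₀ → a i ≠ 0 → ¬ (f i).IsRoot x) :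
    rootMultiplicity x (∏ i ∈ s, f i ^ a i) = a i₀ := by
  rw [rootMultiplicity_prod_pow s f a hf, sum_eq_single_of_mem i₀ hi₀, hx, mul_one]
  intro i hi hne
  by_cases ha : a i = 0
  · rw [ha, zero_mul]
  · rw [rootMultiplicity_eq_zero (hother i hi hne ha), mul_zero]

end RootMultiplicity

theorem card_filter_pow_eq_one_ne_one_lt {K : Type*} [CommRing K] [IsDomain K] [Fintype K]
    [DecidableEq K] {e : ℕ} (he : 0 < e) :
    #{γ : K | γ ^ e = 1 ∧ γ ≠ 1} < e := by
  have hsub : ({γ : K | γ ^ e = 1 ∧ γ ≠ 1} : Finset K) ⊆ (nthRootsFinset e (1 : K)).erase 1 :=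
    fun γ hγ => by
      rw [mem_filter] at hγ
      exact mem_erase.2 ⟨hγ.2.2, (mem_nthRootsFinset he 1).2 hγ.2.1⟩
  calc #{γ : K | γ ^ e = 1 ∧ γ ≠ 1} ≤ #((nthRootsFinset e (1 : K)).erase 1) := card_le_card hsub
    _ < #(nthRootsFinset e (1 : K)) := card_erase_lt_of_mem (one_mem_nthRootsFinset he)
    _ ≤ e := by
        rw [nthRootsFinset_def]
        exact (Multiset.toFinset_card_le _).trans (card_nthRoots e 1)

theorem natCast_ne_one_of_coprime_card {K : Type*} [Field K] [Fintype K] {d : ℕ} (hd : 1 ≤ d)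
    (h : Nat.Coprime (d - 1) (Fintype.card K)) : (d : K) ≠ 1 := by
  intro hd1
  have hchar : ringChar K ∣ d - 1 := by
    rw [← CharP.cast_eq_zero_iff K, Nat.cast_sub hd, hd1, Nat.cast_one, sub_self]
  have hcard : ringChar K ∣ Fintype.card K :=
    (CharP.cast_eq_zero_iff K _ _).1 (Nat.cast_card_eq_zero K)
  exact CharP.ringChar_ne_one (Nat.dvd_one.1 (h ▸ Nat.dvd_gcd hchar hcard))

theorem mul_sum_range_pow_succ_add_le {n d m : ℕ} (hn : n + 1 ≤ d) (hm : 1 ≤ m) :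
    n * ∑ i ∈ range (m - 1), d ^ (i + 1) + d ≤ d ^ m := by
  obtain ⟨d, rfl⟩ : ∃ d', d = d' + 1 := ⟨d - 1, by omega⟩
  obtain ⟨m, rfl⟩ : ∃ m', m = m' + 1 := ⟨m - 1, by omega⟩
  simp only [Nat.add_sub_cancel, pow_succ, ← sum_mul]
  calc n * ((∑ i ∈ range m, (d + 1) ^ i) * (d + 1)) + (d + 1)
      ≤ d * ((∑ i ∈ range m, (d + 1) ^ i) * (d + 1)) + (d + 1) := by gcongr; omega
    _ = ((∑ i ∈ range m, (d + 1) ^ i) * d + 1) * (d + 1) := by ring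
    _ = (d + 1) ^ m * (d + 1) := by rw [geom_sum_mul_add]

section Iterates

variable {E : Type*} [Field E] {d : ℕ}

theorem Fiter_eq_iterate (k : ℕ) : Fiter E d k = (fun W => W ^ d + X)^[k] X := by
  induction k with
  | zero => rfl
  | succ k ih => rw [Function.iterate_succ_apply', ← ih]; rfl

theorem Fiter_add (j i : ℕ) :
    Fiter E d (j + i) = (fun W => W ^ d + X)^[i] (Fiter E d j) := by
  rw [Fiter_eq_iterate, Fiter_eq_iterate, add_comm, Function.iterate_add_apply]

theorem eval_iterate_pow_add_X (p : E[X]) (x : E) (i : ℕ) :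
    ((fun W => W ^ d + X)^[i] p).eval x = (fun y => y ^ d + x)^[i] (p.eval x) := by
  induction i with
  | zero => rfl
  | succ i ih => simp only [Function.iterate_succ_apply', eval_add, eval_pow, eval_X, ih]

theorem natDegree_iterate_pow_add_X (hd : 2 ≤ d) {p : E[X]} (hp : 1 ≤ p.natDegree) (i : ℕ) :
    ((fun W => W ^ d + X)^[i] p).natDegree = d ^ i * p.natDegree := by
  induction i with
  | zero => simp
  | succ i ih =>
    have hpow : (((fun W => W ^ d + X)^[i] p) ^ d).natDegree = d ^ (i + 1) * p.natDegree := by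
      rw [natDegree_pow, ih, pow_succ]; ring
    have hd' : 2 ≤ d ^ (i + 1) := hd.trans (Nat.le_self_pow (Nat.succ_ne_zero i) d)
    rw [Function.iterate_succ_apply', natDegree_add_eq_left_of_natDegree_lt, hpow]
    rw [natDegree_X, hpow]
    nlinarith

theorem natDegree_Fiter (hd : 2 ≤ d) (k : ℕ) : (Fiter E d k).natDegree = d ^ k := by
  rw [Fiter_eq_iterate, natDegree_iterate_pow_add_X hd (by simp), natDegree_X, mul_one]

theorem X_dvd_Fiter (hd : d ≠ 0) (k : ℕ) : (X : E[X]) ∣ Fiter E d k := by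
  induction k with
  | zero => exact dvd_rfl
  | succ k ih => exact dvd_add (dvd_pow ih hd) dvd_rfl

theorem coeff_Fiter_one (hd : 2 ≤ d) (k : ℕ) : (Fiter E d k).coeff 1 = 1 := by
  induction k with
  | zero => exact coeff_X_one
  | succ k ih =>
    obtain ⟨q, hq⟩ := (pow_dvd_pow (X : E[X]) hd).trans
      (pow_dvd_pow_of_dvd (X_dvd_Fiter (E := E) (d := d) (by omega) k) d)
    change ((Fiter E d k) ^ d + X).coeff 1 = 1
    rw [coeff_add, hq, coeff_X_one, coeff_X_pow_mul', if_neg (by norm_num), zero_add]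

theorem map_Fiter {L : Type*} [Field L] (φ : E →+* L) (k : ℕ) :
    (Fiter E d k).map φ = Fiter L d k := by
  induction k with
  | zero => exact map_X φ
  | succ k ih =>
    change ((Fiter E d k) ^ d + X).map φ = (Fiter L d k) ^ d + X
    rw [Polynomial.map_add, Polynomial.map_pow, ih, map_X]

end Iterates

section Gpoly

variable {E : Type*} [Field E] {d : ℕ}

theorem natDegree_C_mul_sub_X {c : E} (hc : c ≠ 0) {p : E[X]} (hp : 2 ≤ p.natDegree) :
    (C c * p - X).natDegree = p.natDegree := by
  rw [natDegree_sub_eq_left_of_natDegree_lt, natDegree_C_mul hc]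
  rw [natDegree_X, natDegree_C_mul hc]
  omega

theorem natDegree_Gpoly (hd : 2 ≤ d) {c : E} (hc : c ≠ 0) {k : ℕ} (hk : 1 ≤ k) :
    (Gpoly E d c k).natDegree = d ^ k := by
  rw [Gpoly, natDegree_C_mul_sub_X hc, natDegree_Fiter hd]
  rw [natDegree_Fiter hd]
  exact hd.trans (Nat.le_self_pow (by omega) d)

theorem Gpoly_ne_zero (hd : 2 ≤ d) {c : E} (hc : c ≠ 0) {k : ℕ} (hk : 1 ≤ k) :
    Gpoly E d c k ≠ 0 := by
  intro h
  have := natDegree_Gpoly hd hc hk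
  rw [h, natDegree_zero] at this
  exact pow_ne_zero k (by omega : d ≠ 0) this.symm

theorem eval_Gpoly (c : E) (k : ℕ) (x : E) :
    (Gpoly E d c k).eval x = c * (Fiter E d k).eval x - x := by
  simp [Gpoly]

theorem map_Gpoly {L : Type*} [Field L] (φ : E →+* L) (c : E) (k : ℕ) :
    (Gpoly E d c k).map φ = Gpoly L d (φ c) k := by
  rw [Gpoly, Gpoly, Polynomial.map_sub, Polynomial.map_mul, map_C, map_X, map_Fiter]

theorem eq_of_isRoot_Gpoly {c δ : E} {k : ℕ} {x : E} (hx : x ≠ 0)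
    (hc : (Gpoly E d c k).IsRoot x) (hδ : (Gpoly E d δ k).IsRoot x) : c = δ := by
  rw [IsRoot, eval_Gpoly, sub_eq_zero] at hc hδ
  exact mul_right_cancel₀ (fun h => hx (by rw [← hc, h, mul_zero])) (hc.trans hδ.symm)

theorem isRoot_of_isRoot_Gpoly_of_isRoot_Gpoly_add {c δ : E} (hδ : δ ≠ 0) {j i : ℕ} {x : E}
    (hj : (Gpoly E d δ j).IsRoot x) (hji : (Gpoly E d c (j + i)).IsRoot x) :
    (C c * (fun W => W ^ d + X)^[i] (C δ⁻¹ * X) - X).IsRoot x := by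
  rw [IsRoot, eval_Gpoly, sub_eq_zero] at hj
  have hFj : (Fiter E d j).eval x = (C δ⁻¹ * X).eval x := by
    rw [eval_mul, eval_C, eval_X]
    exact (eq_inv_mul_iff_mul_eq₀ hδ).2 hj
  rw [IsRoot, eval_Gpoly, Fiter_add, eval_iterate_pow_add_X, hFj] at hji
  rwa [IsRoot, eval_sub, eval_mul, eval_C, eval_X, eval_iterate_pow_add_X]

/-- `F_m · G' - d · F_m' · G = (c - 1) · K_m` for `G = G_{m+1,c}`. -/
noncomputable def Kpoly (E : Type*) [Field E] (d m : ℕ) : E[X] :=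
  Fiter E d m - C (d : E) * X * derivative (Fiter E d m)

theorem Kpoly_ne_zero (hd : 2 ≤ d) (hd1 : (d : E) ≠ 1) (m : ℕ) : Kpoly E d m ≠ 0 := by
  intro h
  have hcoeff : (Kpoly E d m).coeff 1 = 1 - d := by
    rw [Kpoly, coeff_sub, coeff_Fiter_one hd, mul_assoc, coeff_C_mul, coeff_X_mul,
      coeff_derivative, coeff_Fiter_one hd]
    norm_num
  rw [h, coeff_zero, eq_comm, sub_eq_zero] at hcoeff
  exact hd1 hcoeff.symm

theorem natDegree_Kpoly_le (hd : 2 ≤ d) (m : ℕ) : (Kpoly E d m).natDegree ≤ d ^ m := by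
  have hpos : 1 ≤ d ^ m := Nat.one_le_pow _ _ (by omega)
  have hder : (C (d : E) * X * derivative (Fiter E d m)).natDegree ≤ d ^ m :=
    calc _ ≤ (C (d : E) * X).natDegree + (derivative (Fiter E d m)).natDegree := natDegree_mul_le
      _ ≤ 1 + (d ^ m - 1) := by
          gcongr
          · exact (natDegree_C_mul_le _ _).trans natDegree_X_le
          · exact (natDegree_derivative_le _).trans_eq (by rw [natDegree_Fiter hd])
      _ = d ^ m := by omega
  exact (natDegree_sub_le _ _).trans (max_le (natDegree_Fiter hd m).le hder)

theorem rootMultiplicity_Gpoly_sub_one_le (hd : 2 ≤ d) (hd1 : (d : E) ≠ 1) {c : E} (hc : c ≠ 1)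
    (m : ℕ) (x : E) :
    rootMultiplicity x (Gpoly E d c (m + 1)) - 1 ≤ rootMultiplicity x (Kpoly E d m) := by
  set F := Fiter E d m
  have hu : C (c - 1)⁻¹ * (C c - 1) = 1 := by
    rw [← C_1, ← C_sub, ← C_mul, inv_mul_cancel₀ (sub_ne_zero.2 hc), C_1]
  have hFd : F ^ d = F ^ (d - 1) * F := (pow_sub_one_mul (by omega) F).symm
  refine rootMultiplicity_sub_one_le_of_add_eq (Kpoly_ne_zero hd hd1 m)
    (-(C (c - 1)⁻¹ * C (d : E) * derivative F)) (C (c - 1)⁻¹ * F) ?_ x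
  change _ * (C c * (F ^ d + X) - X) + _ * derivative (C c * (F ^ d + X) - X) = Kpoly E d m
  simp only [Kpoly, derivative_sub, derivative_mul, derivative_C, zero_mul, zero_add,
    derivative_add, derivative_pow, derivative_X]
  rw [hFd]
  linear_combination (F - C (d : E) * X * derivative F) * hu

theorem rootMultiplicity_Gpoly_eq_one (hd : 2 ≤ d) (hd1 : (d : E) ≠ 1) {c : E} (hc0 : c ≠ 0)
    (hc1 : c ≠ 1) {m : ℕ} {x : E} (hx : (Gpoly E d c (m + 1)).IsRoot x)
    (hK : ¬ (Kpoly E d m).IsRoot x) :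
    rootMultiplicity x (Gpoly E d c (m + 1)) = 1 := by
  have hpos := (rootMultiplicity_pos (Gpoly_ne_zero hd hc0 (Nat.le_add_left 1 m))).2 hx
  have hle := rootMultiplicity_Gpoly_sub_one_le hd hd1 hc1 m x
  rw [rootMultiplicity_eq_zero hK] at hle
  omega

theorem le_card_roots_toFinset_Gpoly_add [IsAlgClosed E] [DecidableEq E] (hd : 2 ≤ d)
    (hd1 : (d : E) ≠ 1) {c : E} (hc0 : c ≠ 0) (hc1 : c ≠ 1) (m : ℕ) :
    d ^ (m + 1) ≤ #(Gpoly E d c (m + 1)).roots.toFinset + d ^ m :=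
  calc d ^ (m + 1) = Multiset.card (Gpoly E d c (m + 1)).roots := by
        rw [IsAlgClosed.card_roots_eq_natDegree, natDegree_Gpoly hd hc0 (by omega)]
    _ ≤ #(Gpoly E d c (m + 1)).roots.toFinset + Multiset.card (Kpoly E d m).roots :=
        card_roots_le_card_roots_toFinset_add (rootMultiplicity_Gpoly_sub_one_le hd hd1 hc1 m)
    _ ≤ #(Gpoly E d c (m + 1)).roots.toFinset + d ^ m := by
        gcongr; exact (card_roots' _).trans (natDegree_Kpoly_le hd m)

theorem exists_finset_common_roots_Gpoly (hd : 2 ≤ d) {c : E} (hc : c ≠ 0) {Γ : Finset E}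
    (hΓ : ∀ δ ∈ Γ, δ ≠ 0) (hΓd : #Γ < d) {k : ℕ} (hk : 2 ≤ k) :
    ∃ B : Finset E, #B + d ≤ d ^ (k - 1) ∧
      ∀ x, (Gpoly E d c k).IsRoot x →
        ∀ j, 2 ≤ j → j < k → ∀ δ ∈ Γ, (Gpoly E d δ j).IsRoot x → x ∈ B := by
  classical
  set V : ℕ × E → E[X] := fun p => C c * (fun W => W ^ d + X)^[p.1 + 1] (C p.2⁻¹ * X) - X
  have hV : ∀ p ∈ range (k - 2) ×ˢ Γ, (V p).natDegree = d ^ (p.1 + 1) := fun p hp => by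
    have hp2 : p.2⁻¹ ≠ 0 := inv_ne_zero (hΓ p.2 (mem_product.1 hp).2)
    have hdeg := natDegree_iterate_pow_add_X hd (p := C p.2⁻¹ * X)
      (by rw [natDegree_C_mul_X _ hp2]) (p.1 + 1)
    rw [natDegree_C_mul_X _ hp2, mul_one] at hdeg
    rw [natDegree_C_mul_sub_X hc, hdeg]
    rw [hdeg]
    exact hd.trans (Nat.le_self_pow (Nat.succ_ne_zero _) d)
  refine ⟨(range (k - 2) ×ˢ Γ).biUnion fun p => (V p).roots.toFinset, ?_, ?_⟩
  · have hcard : #((range (k - 2) ×ˢ Γ).biUnion fun p => (V p).roots.toFinset) ≤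
        #Γ * ∑ i ∈ range (k - 1 - 1), d ^ (i + 1) :=
      calc _ ≤ ∑ p ∈ range (k - 2) ×ˢ Γ, #(V p).roots.toFinset := card_biUnion_le
        _ ≤ ∑ p ∈ range (k - 2) ×ˢ Γ, d ^ (p.1 + 1) := sum_le_sum fun p hp =>
            (Multiset.toFinset_card_le _).trans ((card_roots' _).trans (hV p hp).le)
        _ = #Γ * ∑ i ∈ range (k - 1 - 1), d ^ (i + 1) := by
            rw [sum_product, mul_sum, Nat.sub_sub]
            simp only [sum_const, smul_eq_mul]
    have := mul_sum_range_pow_succ_add_le (n := #Γ) (d := d) (m := k - 1) hΓd (by omega)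
    omega
  · intro x hx j hj hjk δ hδ hxδ
    have hmem : (k - j - 1, δ) ∈ range (k - 2) ×ˢ Γ := mem_product.2 ⟨mem_range.2 (by omega), hδ⟩
    have hV0 : V (k - j - 1, δ) ≠ 0 := fun h => by
      have := hV _ hmem
      rw [h, natDegree_zero] at this
      exact pow_ne_zero _ (by omega : d ≠ 0) this.symm
    refine mem_biUnion.2 ⟨(k - j - 1, δ), hmem, Multiset.mem_toFinset.2 ((mem_roots hV0).2 ?_)⟩
    refine isRoot_of_isRoot_Gpoly_of_isRoot_Gpoly_add (hΓ δ hδ) hxδ ?_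
    rwa [show j + (k - j - 1 + 1) = k by omega]

theorem exists_simple_root_Gpoly [IsAlgClosed E] (hd : 3 ≤ d) (hd1 : (d : E) ≠ 1) {c : E}
    (hc0 : c ≠ 0) (hc1 : c ≠ 1) {Γ : Finset E} (hΓ : ∀ δ ∈ Γ, δ ≠ 0) (hΓd : #Γ < d) {k : ℕ}
    (hk : 2 ≤ k) :
    ∃ x, x ≠ 0 ∧ rootMultiplicity x (Gpoly E d c k) = 1 ∧
      ∀ j, 2 ≤ j → j < k → ∀ δ ∈ Γ, ¬ (Gpoly E d δ j).IsRoot x := by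
  classical
  obtain ⟨B, hB, hBroots⟩ := exists_finset_common_roots_Gpoly (by omega) hc0 hΓ hΓd hk
  obtain ⟨m, rfl⟩ : ∃ m, k = m + 1 := ⟨k - 1, by omega⟩
  have hK : #(Kpoly E d m).roots.toFinset ≤ d ^ m :=
    (Multiset.toFinset_card_le _).trans ((card_roots' _).trans (natDegree_Kpoly_le (by omega) m))
  have hlt : #((Kpoly E d m).roots.toFinset ∪ insert 0 B) <
      #(Gpoly E d c (m + 1)).roots.toFinset := by
    have hG := le_card_roots_toFinset_Gpoly_add (by omega) hd1 hc0 hc1 m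
    have h3 : d ^ m * 3 ≤ d ^ (m + 1) := by rw [pow_succ]; exact Nat.mul_le_mul_left _ hd
    have := card_union_le (Kpoly E d m).roots.toFinset (insert 0 B)
    have := card_insert_le 0 B
    rw [Nat.add_sub_cancel] at hB
    omega
  obtain ⟨x, hxG, hx⟩ := exists_mem_notMem_of_card_lt_card hlt
  simp only [mem_union, mem_insert, not_or, Multiset.mem_toFinset] at hx
  obtain ⟨hxK, hx0, hxB⟩ := hx
  have hGx : (Gpoly E d c (m + 1)).IsRoot x := isRoot_of_mem_roots (Multiset.mem_toFinset.1 hxG)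
  refine ⟨x, hx0, ?_, fun j hj hjk δ hδ hxδ => hxB (hBroots x hGx j hj hjk δ hδ hxδ)⟩
  exact rootMultiplicity_Gpoly_eq_one (by omega) hd1 hc0 hc1 hGx
    (fun h => hxK ((mem_roots (Kpoly_ne_zero (by omega) hd1 m)).2 h))

end Gpoly

theorem exists_rootMultiplicity_map_prod_Gpoly_eq {K E : Type*} [Field K] [Field E]
    [IsAlgClosed E] (φ : K →+* E) {d : ℕ} (hd : 3 ≤ d) (hd1 : (d : K) ≠ 1) {Γ : Finset K}
    (hΓ0 : 0 ∉ Γ) (hΓ1 : 1 ∉ Γ) (hΓd : #Γ < d) {s : Finset ℕ} (hs : ∀ j ∈ s, 2 ≤ j)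
    (a : ℕ → K → ℕ) (ha : ∃ j ∈ s, ∃ γ ∈ Γ, a j γ ≠ 0) :
    ∃ j ∈ s, ∃ γ ∈ Γ, a j γ ≠ 0 ∧ ∃ x : E,
      rootMultiplicity x ((∏ j ∈ s, ∏ γ ∈ Γ, Gpoly K d γ j ^ a j γ).map φ) = a j γ := by
  classical
  have hφ0 : ∀ γ ∈ Γ, φ γ ≠ 0 := fun γ hγ h => hΓ0 (by rwa [(map_eq_zero φ).1 h] at hγ)
  obtain ⟨⟨k, c⟩, hkc, hmax⟩ := exists_max_image ((s ×ˢ Γ).filter fun p => a p.1 p.2 ≠ 0)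
    Prod.fst (by
      obtain ⟨j, hj, γ, hγ, h⟩ := ha
      exact ⟨(j, γ), mem_filter.2 ⟨mem_product.2 ⟨hj, hγ⟩, h⟩⟩)
  obtain ⟨hkc, hac⟩ := mem_filter.1 hkc
  obtain ⟨hk, hc⟩ := mem_product.1 hkc
  obtain ⟨x, hx0, hx1, hxlow⟩ := exists_simple_root_Gpoly (E := E) hd
    (by rwa [← map_natCast φ, ne_eq, map_eq_one_iff φ φ.injective]) (hφ0 c hc)
    (fun h => hΓ1 (by rwa [(map_eq_one_iff φ φ.injective).1 h] at hc))
    (Γ := Γ.image φ) (by simpa using hφ0) (card_image_le.trans_lt hΓd) (hs k hk)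
  refine ⟨k, hk, c, hc, hac, x, ?_⟩
  rw [← prod_product', Polynomial.map_prod]
  simp only [Polynomial.map_pow, map_Gpoly]
  have hG0 : ∀ p ∈ s ×ˢ Γ, Gpoly E d (φ p.2) p.1 ≠ 0 := fun p hp =>
    Gpoly_ne_zero (by omega) (hφ0 _ (mem_product.1 hp).2) (by linarith [hs _ (mem_product.1 hp).1])
  refine rootMultiplicity_prod_pow_eq_of_ne (s := s ×ˢ Γ) (f := fun p => Gpoly E d (φ p.2) p.1)
    (a := fun p => a p.1 p.2) (i₀ := (k, c)) hG0 hkc hx1 ?_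
  rintro ⟨j, γ⟩ hjγ hne haj hroot
  obtain ⟨hj, hγ⟩ := mem_product.1 hjγ
  rcases (hmax (j, γ) (mem_filter.2 ⟨hjγ, haj⟩)).lt_or_eq with hlt | rfl
  · exact hxlow j (hs j hj) hlt (φ γ) (mem_image_of_mem φ hγ) hroot
  · have hxc : (Gpoly E d (φ c) j).IsRoot x :=
      (rootMultiplicity_pos (hG0 _ hkc)).1 (by rw [hx1]; exact one_pos)
    exact hne (Prod.ext rfl (φ.injective (eq_of_isRoot_Gpoly hx0 hroot hxc)))

end

theorem stmt9_general (F : Type*) [Field F] [Fintype F] [DecidableEq F]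
    (d : ℕ) (hd : 3 ≤ d)
    (hdq : Nat.gcd (d - 1) (Fintype.card F) = 1)
    (e : ℕ) (he : e = Nat.gcd d (Fintype.card F - 1))
    (J : ℕ)
    (α : ℕ → F → ℕ) (hα : ∀ j γ, α j γ ≤ e - 1)
    (hne : ∃ j ∈ Finset.Icc 2 J,
      ∃ γ ∈ Finset.univ.filter (fun γ : F => γ ^ e = 1 ∧ γ ≠ 1), α j γ ≠ 0)
    (P : Polynomial (AlgebraicClosure F)) :
    (∏ j ∈ Finset.Icc 2 J,
        ∏ γ ∈ Finset.univ.filter (fun γ : F => γ ^ e = 1 ∧ γ ≠ 1),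
          (Gpoly F d γ j) ^ (α j γ)).map (algebraMap F (AlgebraicClosure F))
      ≠ P ^ e := by
  have he0 : 0 < e := he ▸ Nat.gcd_pos_of_pos_left _ (by omega)
  have hed : e ≤ d := he ▸ Nat.gcd_le_left _ (by omega)
  intro hEq
  obtain ⟨j, -, γ, -, hαγ, x, hx⟩ := exists_rootMultiplicity_map_prod_Gpoly_eq
    (algebraMap F (AlgebraicClosure F)) hd (natCast_ne_one_of_coprime_card (by omega) hdq)
    (by simp [zero_pow he0.ne']) (by simp) ((card_filter_pow_eq_one_ne_one_lt he0).trans_le hed)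
    (fun j hj => (Finset.mem_Icc.1 hj).1) α hne
  rw [hEq, Polynomial.rootMultiplicity_pow] at hx
  exact hαγ (Nat.eq_zero_of_dvd_of_lt ⟨_, hx.symm⟩ (by have := hα j γ; omega))

theorem stmt9 (F : Type*) [Field F] [Fintype F] [DecidableEq F]
    (d : ℕ) (hd : 3 ≤ d)
    (hdq : Nat.gcd (d - 1) (Fintype.card F) = 1)
    (e : ℕ) (he : e = Nat.gcd d (Fintype.card F - 1)) (he2 : 2 ≤ e)
    (J : ℕ) (hJ : 2 ≤ J)
    (α : ℕ → F → ℕ) (hα : ∀ j γ, α j γ ≤ e - 1)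
    (hne : ∃ j ∈ Finset.Icc 2 J,
      ∃ γ ∈ Finset.univ.filter (fun γ : F => γ ^ e = 1 ∧ γ ≠ 1), α j γ ≠ 0)
    (P : Polynomial (AlgebraicClosure F)) :
    (∏ j ∈ Finset.Icc 2 J,
        ∏ γ ∈ Finset.univ.filter (fun γ : F => γ ^ e = 1 ∧ γ ≠ 1),
          (Gpoly F d γ j) ^ (α j γ)).map (algebraMap F (AlgebraicClosure F))
      ≠ P ^ e :=
  stmt9_general F d hd hdq e he J α hα hne P
end

section
/- Let q be a power of a prime p and let f ∈ F_q[X] be a polynomial of degree d ≥ 2. If there exists μ ∈ F_q with μ ≠ 0 such that f(X + μ) = f(X) + μ as polynomials, then p divides d. -/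
/-! Comparing the coefficients of `X ^ (d - 1)` in `f (X + μ) = f (X) + μ`: on the left it is
`a_{d-1} + d a_d μ` (Taylor expansion at `μ`), on the right it is `a_{d-1}` because `d - 1 ≥ 1`.
Hence `d a_d μ = 0`, so `d = 0` in `F`. -/

open Polynomial

namespace Polynomial

variable {R : Type*} [CommSemiring R]

theorem hasseDeriv_eq_of_natDegree_le_succ {f : R[X]} {n : ℕ} (hf : f.natDegree ≤ n + 1) :
    hasseDeriv n f = C (f.coeff n) + C ((n + 1) * f.coeff (n + 1)) * X := by
  ext k
  rw [hasseDeriv_coeff]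
  match k with
  | 0 => simp
  | 1 => simp [add_comm 1 n]
  | k + 2 =>
    have hzero : f.coeff (k + 2 + n) = 0 := coeff_eq_zero_of_natDegree_lt (by omega)
    simp [hzero, coeff_one]

theorem taylor_coeff_of_natDegree_le_succ {f : R[X]} {n : ℕ} (hf : f.natDegree ≤ n + 1)
    (r : R) : (taylor r f).coeff n = f.coeff n + (n + 1) * f.coeff (n + 1) * r := by
  simp [taylor_coeff, hasseDeriv_eq_of_natDegree_le_succ hf, mul_assoc]

theorem natDegree_cast_eq_zero_of_comp_X_add_C_eq_add_C {K : Type*} [CommRing K] [IsDomain K]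
    {f : K[X]} (hf : 2 ≤ f.natDegree) {μ : K} (hμ : μ ≠ 0) (h : f.comp (X + C μ) = f + C μ) :
    (f.natDegree : K) = 0 := by
  obtain ⟨n, hn⟩ : ∃ n, f.natDegree = n + 1 := ⟨f.natDegree - 1, by omega⟩
  have hcoeff := taylor_coeff_of_natDegree_le_succ hn.le μ
  rw [taylor_apply, h, coeff_add, coeff_C, if_neg (by omega), add_zero,
    left_eq_add, ← hn, ← leadingCoeff] at hcoeff
  have hlc : f.leadingCoeff ≠ 0 := leadingCoeff_ne_zero.mpr (by rintro rfl; simp at hf)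
  simpa [hn, hμ, hlc] using hcoeff

end Polynomial

open Polynomial in
theorem stmt13_general (p : ℕ) (F : Type*) [Field F] [CharP F p]
    (d : ℕ) (hd : 2 ≤ d) (f : Polynomial F) (hf : f.natDegree = d)
    (mu : F) (hmu : mu ≠ 0)
    (h : f.comp (X + C mu) = f + C mu) :
    p ∣ d := by
  subst hf
  exact (CharP.cast_eq_zero_iff F p _).mp
    (natDegree_cast_eq_zero_of_comp_X_add_C_eq_add_C hd hmu h)

open Polynomial in
theorem stmt13 (p : ℕ) (hp : p.Prime) (F : Type*) [Field F] [Fintype F] [CharP F p]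
    (d : ℕ) (hd : 2 ≤ d) (f : Polynomial F) (hf : f.natDegree = d)
    (mu : F) (hmu : mu ≠ 0)
    (h : f.comp (X + C mu) = f + C mu) :
    p ∣ d :=
  stmt13_general p F d hd f hf mu hmu h
end

section
/- Let q be a power of a prime p, let d ≥ 2 be an integer with p | d, and let μ ∈ F_q with μ ≠ 0. Then the number of polynomials f ∈ F_q[X] of degree exactly d satisfying f(X + μ) = f(X) + μ is at most (q−1)·q^{d/p}. -/
/-!
A shift-invariant polynomial `h(X + μ) = h` with `μ ≠ 0` has degree divisible by `p`: comparing
the coefficients of `X^(n-1)` on both sides gives `n * μ * lc(h) = 0`. The difference of two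
solutions of `f(X + μ) = f(X) + μ` is shift-invariant, so a solution of degree `d` is determined
by its leading coefficient together with its coefficients at `p * k` for `k < d / p`.
-/

open Polynomial

namespace Polynomial

theorem taylor_coeff_natDegree_sub_one {R : Type*} [CommSemiring R] (f : R[X]) (r : R) :
    (taylor r f).coeff (f.natDegree - 1) =
      f.coeff (f.natDegree - 1) + f.natDegree * f.leadingCoeff * r := by
  set n := f.natDegree
  rcases Nat.eq_zero_or_pos n with hn | hn
  · rw [hn, Nat.cast_zero, zero_mul, zero_mul, add_zero, taylor_coeff_zero,
      eq_C_of_natDegree_eq_zero hn, eval_C, coeff_C_zero]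
  have hlin := eq_X_add_C_of_natDegree_le_one <|
    (natDegree_hasseDeriv_le f (n - 1)).trans (by omega : n - (n - 1) ≤ 1)
  have hchoose : n.choose (n - 1) = n := by
    rw [Nat.choose_symm hn, Nat.choose_one_right]
  rw [taylor_coeff, hlin, hasseDeriv_coeff, hasseDeriv_coeff,
    show 1 + (n - 1) = n by omega, hchoose]
  simp only [eval_add, eval_mul, eval_C, eval_X, zero_add, Nat.choose_self, Nat.cast_one, one_mul]
  exact add_comm _ _

variable {R : Type*} [CommRing R] [NoZeroDivisors R] {μ : R}

theorem natDegree_cast_eq_zero_of_comp_X_add_C_eq_self (hμ : μ ≠ 0) {f : R[X]}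
    (hf : f.comp (X + C μ) = f) : (f.natDegree : R) = 0 := by
  rcases eq_or_ne f 0 with rfl | hf0
  · simp
  have h := taylor_coeff_natDegree_sub_one f μ
  rw [taylor_apply, hf, left_eq_add] at h
  simpa [hμ, hf0] using h

variable (p : ℕ) [CharP R p]

theorem dvd_natDegree_of_comp_X_add_C_eq_self (hμ : μ ≠ 0) {f : R[X]}
    (hf : f.comp (X + C μ) = f) : p ∣ f.natDegree :=
  (CharP.cast_eq_zero_iff R p _).mp (natDegree_cast_eq_zero_of_comp_X_add_C_eq_self hμ hf)

theorem eq_zero_of_comp_X_add_C_eq_self_of_coeff_mul_eq_zero (hμ : μ ≠ 0) {f : R[X]}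
    (hf : f.comp (X + C μ) = f) {m : ℕ} (hdeg : f.natDegree ≤ p * m)
    (hcoeff : ∀ k ≤ m, f.coeff (p * k) = 0) : f = 0 := by
  by_contra hf0
  have hk : p * (f.natDegree / p) = f.natDegree :=
    Nat.mul_div_cancel' (dvd_natDegree_of_comp_X_add_C_eq_self p hμ hf)
  have := hcoeff _ (Nat.div_le_of_le_mul hdeg)
  rw [hk] at this
  exact hf0 (leadingCoeff_eq_zero.mp this)

theorem eq_of_comp_X_add_C_eq_add_C_of_coeff_mul_eq (hμ : μ ≠ 0) {c : R} {f g : R[X]}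
    (hf : f.comp (X + C μ) = f + C c) (hg : g.comp (X + C μ) = g + C c) {m : ℕ}
    (hfd : f.natDegree = p * m) (hgd : g.natDegree = p * m)
    (hlc : f.leadingCoeff = g.leadingCoeff)
    (hcoeff : ∀ k < m, f.coeff (p * k) = g.coeff (p * k)) : f = g := by
  rw [← sub_eq_zero]
  refine eq_zero_of_comp_X_add_C_eq_self_of_coeff_mul_eq_zero p hμ
    (by rw [sub_comp, hf, hg, add_sub_add_right_eq_sub]) (m := m) ?_ fun k hk => ?_
  · exact (natDegree_sub_le f g).trans (by rw [hfd, hgd, max_self])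
  · rw [coeff_sub, sub_eq_zero]
    rcases hk.lt_or_eq with hk | rfl
    · exact hcoeff k hk
    · rwa [← hfd, ← leadingCoeff, hfd, ← hgd, ← leadingCoeff]

end Polynomial

open Polynomial in
theorem stmt14_general (p : ℕ) (F : Type*) [Field F] [Fintype F] [CharP F p]
    (d : ℕ) (hpd : p ∣ d) (mu : F) (hmu : mu ≠ 0) :
    Nat.card {f : Polynomial F //
        f.natDegree = d ∧ f.comp (X + C mu) = f + C mu} ≤
      (Fintype.card F - 1) * Fintype.card F ^ (d / p) := by
  classical
  set S := {f : Polynomial F // f.natDegree = d ∧ f.comp (X + C mu) = f + C mu}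
  have hdp : p * (d / p) = d := Nat.mul_div_cancel' hpd
  have hne : ∀ f : S, f.1 ≠ 0 := by
    rintro ⟨f, -, hf⟩ rfl
    exact hmu (C_eq_zero.mp (by simpa using hf.symm))
  let coords : S → Fˣ × (Fin (d / p) → F) := fun f =>
    (Units.mk0 _ (leadingCoeff_ne_zero.mpr (hne f)), fun k => f.1.coeff (p * k))
  have hinj : coords.Injective := by
    rintro ⟨f, hfd, hf⟩ ⟨g, hgd, hg⟩ hfg
    simp only [coords, Prod.ext_iff, Units.ext_iff, Units.val_mk0, funext_iff] at hfg
    exact Subtype.ext <| eq_of_comp_X_add_C_eq_add_C_of_coeff_mul_eq p hmu hf hg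
      (hfd.trans hdp.symm) (hgd.trans hdp.symm) hfg.1 fun k hk => hfg.2 ⟨k, hk⟩
  calc Nat.card S ≤ Nat.card (Fˣ × (Fin (d / p) → F)) := Nat.card_le_card_of_injective _ hinj
    _ = (Fintype.card F - 1) * Fintype.card F ^ (d / p) := by
      rw [Nat.card_prod, Nat.card_eq_fintype_card, Nat.card_eq_fintype_card,
        Fintype.card_units, Fintype.card_fun, Fintype.card_fin]

open Polynomial in
theorem stmt14 (p : ℕ) (hp : p.Prime) (F : Type*) [Field F] [Fintype F] [CharP F p]
    (d : ℕ) (hd : 2 ≤ d) (hpd : p ∣ d) (mu : F) (hmu : mu ≠ 0) :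
    Nat.card {f : Polynomial F //
        f.natDegree = d ∧ f.comp (X + C mu) = f + C mu} ≤
      (Fintype.card F - 1) * Fintype.card F ^ (d / p) :=
  stmt14_general p F d hpd mu hmu
end

section
/- Let q be a prime power, let d ≥ 3 be an integer, let λ ∈ F_q^* satisfy λ^{d−1} = 1 and λ ≠ 1, and let μ ∈ F_q. Then the number of polynomials f ∈ F_q[X] of degree exactly d satisfying f(λX + μ) = λ·f(X) + μ is at most (q−1)·q^{d−1−φ(d−1)}, where φ is Euler's totient function. -/
/-!
Let `c` be the fixed point of `x ↦ λx + μ`. Conjugating by the translation by `c`, the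
polynomial `g = f(X + c) - c` satisfies `g(λX) = λ g(X)`, so its coefficient `g_i` vanishes
unless `λ^i = λ`, i.e. unless `ord λ ∣ i - 1`. Hence `f` is determined by the nonzero leading
coefficient of `g` and the coefficients `g_i`, `i < d`, with `ord λ ∣ i - 1`. These indices
correspond to multiples of `ord λ` in `[0, d - 1)`, none of which is coprime to `d - 1` because
`1 ≠ ord λ ∣ d - 1`; so there are at most `d - 1 - φ(d - 1)` of them.
-/

open Polynomial Finset
open scoped Nat

namespace Nat

theorem card_filter_dvd_add_totient_le {n k : ℕ} (hk : k ≠ 1) (hkn : k ∣ n) :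
    #{a ∈ range n | k ∣ a} + φ n ≤ n := by
  have hdisj : Disjoint {a ∈ range n | k ∣ a} {a ∈ range n | n.Coprime a} := by
    rw [disjoint_filter]
    intro a _ hka hcop
    apply hk
    exact Nat.eq_one_of_dvd_one (hcop.gcd_eq_one ▸ Nat.dvd_gcd hkn hka)
  rw [totient_eq_card_coprime, ← card_union_of_disjoint hdisj]
  exact (card_le_card (union_subset (filter_subset _ _) (filter_subset _ _))).trans_eq
    (card_range n)

end Nat

theorem card_filter_pow_eq_self_le {M : Type*} [MonoidWithZero M] [IsRightCancelMulZero M]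
    [DecidableEq M] {a : M} {d : ℕ} (ha0 : a ≠ 0) (ha1 : a ≠ 1) (hd : a ^ (d - 1) = 1) :
    #{i ∈ range d | a ^ i = a} ≤ d - 1 - φ (d - 1) := by
  calc #{i ∈ range d | a ^ i = a}
      ≤ #({j ∈ range (d - 1) | orderOf a ∣ j}.map (addRightEmbedding 1)) := by
        refine card_le_card fun i hi => ?_
        obtain ⟨hid, hia⟩ := mem_filter.1 hi
        obtain _ | j := i
        · exact absurd (pow_zero a ▸ hia).symm ha1
        · refine mem_map.2 ⟨j, mem_filter.2 ⟨?_, orderOf_dvd_of_pow_eq_one ?_⟩, rfl⟩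
          · simp only [mem_range] at hid ⊢
            omega
          · exact mul_right_cancel₀ ha0 (by rw [← pow_succ, hia, one_mul])
    _ = #{j ∈ range (d - 1) | orderOf a ∣ j} := card_map _
    _ ≤ d - 1 - φ (d - 1) := by
        have := Nat.card_filter_dvd_add_totient_le (mt orderOf_eq_one_iff.1 ha1)
          (orderOf_dvd_of_pow_eq_one hd)
        omega

namespace Polynomial

variable {R : Type*}

theorem coeff_comp_C_mul_X [CommSemiring R] (p : R[X]) (a : R) (i : ℕ) :
    (p.comp (C a * X)).coeff i = a ^ i * p.coeff i := by
  induction p using Polynomial.induction_on' with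
  | add p q hp hq => simp [add_comp, hp, hq, mul_add]
  | monomial n b =>
    rw [monomial_comp, mul_pow, ← C_pow, ← mul_assoc, ← C_mul, coeff_C_mul, coeff_X_pow,
      coeff_monomial]
    rcases eq_or_ne n i with rfl | h
    · simp [mul_comm]
    · simp [h, Ne.symm h]

theorem coeff_eq_zero_of_comp_C_mul_X_eq [CommRing R] [IsDomain R] {g : R[X]} {a : R}
    (hg : g.comp (C a * X) = C a * g) {i : ℕ} (hi : a ^ i ≠ a) : g.coeff i = 0 := by
  have h := congrArg (coeff · i) hg
  simp only [coeff_comp_C_mul_X, coeff_C_mul] at h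
  exact (mul_eq_zero.1 (by linear_combination h : (a ^ i - a) * g.coeff i = 0)).resolve_left
    (sub_ne_zero.2 hi)

theorem comp_C_mul_X_taylor_sub_C [CommRing R] {f : R[X]} {a b c : R} (hc : a * c + b = c)
    (hf : f.comp (C a * X + C b) = C a * f + C b) :
    (taylor c f - C c).comp (C a * X) = C a * (taylor c f - C c) := by
  have hC : C a * C c + C b = C c := by rw [← C_mul, ← C_add, hc]
  have hshift : (C a * X + C b).comp (X + C c) = (X + C c).comp (C a * X) := by
    simp only [add_comp, mul_comp, C_comp, X_comp]
    linear_combination hC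
  have htaylor : (taylor c f).comp (C a * X) = C a * taylor c f + C b := by
    rw [taylor_apply, comp_assoc, ← hshift, ← comp_assoc, hf, add_comp, mul_comp, C_comp,
      C_comp]
  rw [sub_comp, C_comp, htaylor]
  linear_combination hC

theorem card_le_of_injective_of_natDegree_eq [Semiring R] [Fintype R] {ι : Type*} {d : ℕ}
    (hd : d ≠ 0) (S : Finset ℕ) (g : ι → R[X]) (hg : Function.Injective g)
    (hdeg : ∀ x, (g x).natDegree = d) (hS : ∀ x, ∀ i < d, i ∉ S → (g x).coeff i = 0) :
    Nat.card ι ≤ (Fintype.card R - 1) * Fintype.card R ^ #S := by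
  classical
  have hne : ∀ x, g x ≠ 0 := fun x =>
    ne_zero_of_natDegree_gt ((hdeg x).symm ▸ Nat.pos_of_ne_zero hd)
  let Φ : ι → {r : R // r ≠ 0} × (S → R) := fun x =>
    (⟨(g x).leadingCoeff, leadingCoeff_ne_zero.2 (hne x)⟩, fun i => (g x).coeff i)
  have hΦ : Function.Injective Φ := by
    intro x y hxy
    simp only [Φ, Prod.mk.injEq, Subtype.mk.injEq, funext_iff, Subtype.forall] at hxy
    refine hg (ext fun i => ?_)
    rcases lt_trichotomy i d with hi | rfl | hi
    · by_cases his : i ∈ S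
      · exact hxy.2 i his
      · rw [hS x i hi his, hS y i hi his]
    · simpa [leadingCoeff, hdeg] using hxy.1
    · rw [coeff_eq_zero_of_natDegree_lt ((hdeg x).symm ▸ hi),
        coeff_eq_zero_of_natDegree_lt ((hdeg y).symm ▸ hi)]
  refine (Nat.card_le_card_of_injective Φ hΦ).trans_eq ?_
  simp [Nat.card_eq_fintype_card, Fintype.card_subtype_compl]

end Polynomial

open Polynomial in
theorem stmt15 (F : Type*) [Field F] [Fintype F] (d : ℕ) (hd : 3 ≤ d)
    (lam : F) (hlam0 : lam ≠ 0) (hlam1 : lam ^ (d - 1) = 1) (hlamne : lam ≠ 1)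
    (mu : F) :
    Nat.card {f : Polynomial F //
        f.natDegree = d ∧ f.comp (C lam * X + C mu) = C lam * f + C mu} ≤
      (Fintype.card F - 1) * Fintype.card F ^ (d - 1 - Nat.totient (d - 1)) := by
  classical
  obtain ⟨c, hc⟩ : ∃ c : F, lam * c + mu = c :=
    ⟨mu / (1 - lam), by field_simp [sub_ne_zero.2 hlamne.symm]; ring⟩
  calc _ ≤ (Fintype.card F - 1) * Fintype.card F ^ #{i ∈ range d | lam ^ i = lam} := by
        refine card_le_of_injective_of_natDegree_eq (d := d) (by omega) _
          (fun f => taylor c f.1 - C c) ?_ (fun f => ?_) (fun f i hi hiS => ?_)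
        · exact fun f g hfg => Subtype.ext (taylor_injective c (sub_left_injective hfg))
        · rw [natDegree_sub_C, natDegree_taylor, f.2.1]
        · exact coeff_eq_zero_of_comp_C_mul_X_eq (comp_C_mul_X_taylor_sub_C hc f.2.2)
            (by simpa [hi] using hiS)
    _ ≤ _ := by
      gcongr
      · exact Fintype.card_pos
      · exact card_filter_pow_eq_self_le hlam0 hlamne hlam1
end
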